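/- Assume the k vectors e_2^{(1)} − e_1^{(1)}, …, e_2^{(k)} − e_1^{(k)} are linearly independent over ℚ (the group of invertible elements of the root monoid is an active semidirect product). For a point x the following are equivalent: (i) x*y = y*x for every point y (x lies in the center Z(X) of the root monoid); (ii) x(u) = 0 for every u ∈ S such that ⟨p_r, u⟩ ≠ 0 for some r ≤ k (x lies in the closure of the orbit O_τ), and x(u + e_1^{(r)}) = x(u + e_2^{(r)}) for every r ≤ k and every u ∈ S with ⟨p_s, u⟩ = δ_{sr} for all s ≤ k. (This is Theorem 9.2: Z(X) = closure(O_τ) ∩ {χ^{u+e_1^{(r)}} = χ^{u+e_2^{(r)}} for all (r,u) ∈ I}, where I = {(r,u) : u ∈ S_σ, ⟨p_j,u⟩ = δ_{jr} for all j ≤ k}.) -/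

import Mathlib

/-!
If `x` vanishes off the face, every term of `x * y` and of `y * x` but one evaluates `x` off the
face, so `(x * y)(u) = x(u + ∑ ⟨p_r,u⟩ e₂⁽ʳ⁾) y(u)` and `(y * x)(u) = y(u) x(u + ∑ ⟨p_r,u⟩ e₁⁽ʳ⁾)`.
The two values of `x` agree once they agree at the points with `⟨p, u⟩ = δ_r`: exchange one
`e₁⁽ʳ⁾` for one `e₂⁽ʳ⁾` at a time. Conversely, commuting with the constant point `1` gives these
conditions, and a central `x` vanishes off the face because commuting with `χ_τ · 2^{v_i}`
(`χ_τ` the indicator of the face) would force `u + ∑ ⟨p_r,u⟩ e₁⁽ʳ⁾` and `u + ∑ ⟨p_r,u⟩ e₂⁽ʳ⁾`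
to agree, which linear independence of the `e₂⁽ʳ⁾ - e₁⁽ʳ⁾` rules out when `⟨p, u⟩ ≠ 0`.
-/

open Finset

def pairZ {n : ℕ} (v u : Fin n → ℤ) : ℤ := ∑ i, v i * u i

def InS {n m : ℕ} (q : Fin m → Fin n → ℤ) (u : Fin n → ℤ) : Prop :=
  ∀ j, 0 ≤ pairZ (q j) u

def IsPoint {n m : ℕ} {K : Type*} [Field K] (q : Fin m → Fin n → ℤ)
    (x : (Fin n → ℤ) → K) : Prop :=
  x 0 = 1 ∧ ∀ u v : Fin n → ℤ, InS q u → InS q v → x (u + v) = x u * x v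

def Compatible {n m k : ℕ} (hkm : k ≤ m) (q : Fin m → Fin n → ℤ)
    (e : Fin k → Fin n → ℤ) : Prop :=
  (∀ r s : Fin k, pairZ (q (Fin.castLE hkm s)) (e r) = if r = s then -1 else 0) ∧
  (∀ (r : Fin k) (j : Fin m), k ≤ (j : ℕ) → 0 ≤ pairZ (q j) (e r))

noncomputable def rmul {n m k : ℕ} {K : Type*} [Field K] (hkm : k ≤ m)
    (q : Fin m → Fin n → ℤ) (e1 e2 : Fin k → Fin n → ℤ)
    (x y : (Fin n → ℤ) → K) : (Fin n → ℤ) → K :=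
  fun u =>
    ∑ i ∈ Fintype.piFinset (fun r : Fin k =>
        Finset.range ((pairZ (q (Fin.castLE hkm r)) u).toNat + 1)),
      (∏ r : Fin k, ((pairZ (q (Fin.castLE hkm r)) u).toNat.choose (i r) : K)) *
        x (u + ∑ r : Fin k, (i r : ℤ) • e2 r) *
        y (u + ∑ r : Fin k, (pairZ (q (Fin.castLE hkm r)) u - (i r : ℤ)) • e1 r)

noncomputable def xtau {n m k : ℕ} (K : Type*) [Field K] (hkm : k ≤ m)
    (q : Fin m → Fin n → ℤ) : (Fin n → ℤ) → K :=
  fun u => if ∀ r : Fin k, pairZ (q (Fin.castLE hkm r)) u = 0 then 1 else 0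

lemma pairZ_add {n : ℕ} (v u w : Fin n → ℤ) : pairZ v (u + w) = pairZ v u + pairZ v w :=
  dotProduct_add v u w

lemma pairZ_smul {n : ℕ} (v : Fin n → ℤ) (c : ℤ) (w : Fin n → ℤ) :
    pairZ v (c • w) = c * pairZ v w :=
  dotProduct_smul c v w

lemma pairZ_sum {n : ℕ} {ι : Type*} (v : Fin n → ℤ) (s : Finset ι) (f : ι → Fin n → ℤ) :
    pairZ v (∑ i ∈ s, f i) = ∑ i ∈ s, pairZ v (f i) :=
  dotProduct_sum v s f

section Face

variable {n m k : ℕ} (hkm : k ≤ m) (q : Fin m → Fin n → ℤ)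

def facePairing (u : Fin n → ℤ) (r : Fin k) : ℤ := pairZ (q (Fin.castLE hkm r)) u

/-- Membership in the closure of the orbit `O_τ`. -/
def VanishesOffFace {K : Type*} [Field K] (x : (Fin n → ℤ) → K) : Prop :=
  ∀ u : Fin n → ℤ, InS q u → (∃ r : Fin k, pairZ (q (Fin.castLE hkm r)) u ≠ 0) → x u = 0

variable {hkm q}

lemma facePairing_add (u v : Fin n → ℤ) :
    facePairing hkm q (u + v) = facePairing hkm q u + facePairing hkm q v :=
  funext fun _ => pairZ_add _ _ _

lemma facePairing_nonneg {u : Fin n → ℤ} (hu : InS q u) (r : Fin k) :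
    0 ≤ facePairing hkm q u r :=
  hu _

lemma inS_of_facePairing_nonneg {u : Fin n → ℤ} (hface : ∀ r, 0 ≤ facePairing hkm q u r)
    (hoff : ∀ j : Fin m, k ≤ (j : ℕ) → 0 ≤ pairZ (q j) u) : InS q u := by
  intro j
  by_cases hj : (j : ℕ) < k
  · exact hface ⟨j, hj⟩
  · exact hoff j (not_lt.mp hj)

namespace Compatible

variable {e : Fin k → Fin n → ℤ}

lemma facePairing_apply (he : Compatible hkm q e) (r : Fin k) :
    facePairing hkm q (e r) = fun s => if r = s then -1 else 0 :=
  funext (he.1 r)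

lemma facePairing_sum_smul (he : Compatible hkm q e) (c : Fin k → ℤ) :
    facePairing hkm q (∑ r, c r • e r) = -c := by
  funext s
  simp only [facePairing, pairZ_sum, pairZ_smul]
  simp [he.1]

lemma facePairing_add_sum_facePairing_smul_eq_zero (he : Compatible hkm q e) (u : Fin n → ℤ) :
    facePairing hkm q (u + ∑ r, facePairing hkm q u r • e r) = 0 := by
  rw [facePairing_add, he.facePairing_sum_smul, add_neg_cancel]

lemma pairZ_sum_smul_nonneg (he : Compatible hkm q e) {c : Fin k → ℤ} (hc : 0 ≤ c)
    {j : Fin m} (hj : k ≤ (j : ℕ)) : 0 ≤ pairZ (q j) (∑ r, c r • e r) := by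
  rw [pairZ_sum]
  exact sum_nonneg fun r _ => pairZ_smul .. ▸ mul_nonneg (hc r) (he.2 r j hj)

lemma inS_add_sum_smul (he : Compatible hkm q e) {u : Fin n → ℤ} (hu : InS q u)
    {c : Fin k → ℤ} (hc : 0 ≤ c) (hcu : c ≤ facePairing hkm q u) :
    InS q (u + ∑ r, c r • e r) := by
  refine inS_of_facePairing_nonneg (hkm := hkm) (fun r => ?_) (fun j hj => ?_)
  · rw [facePairing_add, he.facePairing_sum_smul]
    simpa [sub_nonneg] using hcu r
  · rw [pairZ_add]
    exact add_nonneg (hu j) (he.pairZ_sum_smul_nonneg hc hj)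

lemma sum_facePairing_add_smul (he : Compatible hkm q e) (u : Fin n → ℤ)
    (f : Fin k → Fin n → ℤ) (r : Fin k) :
    ∑ s, facePairing hkm q (u + e r) s • f s = ∑ s, facePairing hkm q u s • f s - f r := by
  simp [facePairing_add, he.facePairing_apply, add_smul, sum_add_distrib, ite_smul,
    sub_eq_add_neg]

end Compatible

end Face

lemma mem_piFinset_range_toNat_iff {k : ℕ} {P : Fin k → ℤ} (hP : 0 ≤ P) {i : Fin k → ℕ} :
    i ∈ Fintype.piFinset (fun r => range ((P r).toNat + 1)) ↔ ∀ r, (i r : ℤ) ≤ P r := by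
  simp only [Fintype.mem_piFinset, mem_range, Nat.lt_succ_iff]
  exact forall_congr' fun r => by have : 0 ≤ P r := hP r; omega

section Multiplication

variable {n m k : ℕ} {K : Type*} [Field K] {hkm : k ≤ m} {q : Fin m → Fin n → ℤ}
  {e1 e2 : Fin k → Fin n → ℤ}

lemma rmul_apply (x y : (Fin n → ℤ) → K) (u : Fin n → ℤ) :
    rmul hkm q e1 e2 x y u =
      ∑ i ∈ Fintype.piFinset (fun r => range ((facePairing hkm q u r).toNat + 1)),
        (∏ r, ((facePairing hkm q u r).toNat.choose (i r) : K)) *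
          x (u + ∑ r, (i r : ℤ) • e2 r) * y (u + ∑ r, (facePairing hkm q u r - i r) • e1 r) :=
  rfl

lemma rmul_eq_of_vanishesOffFace_left (he2 : Compatible hkm q e2) {z : (Fin n → ℤ) → K}
    (hz : VanishesOffFace hkm q z) (w : (Fin n → ℤ) → K) {u : Fin n → ℤ} (hu : InS q u) :
    rmul hkm q e1 e2 z w u = z (u + ∑ r, facePairing hkm q u r • e2 r) * w u := by
  have hP : 0 ≤ facePairing hkm q u := facePairing_nonneg hu
  rw [rmul_apply]
  refine (sum_eq_single_of_mem (fun r => (facePairing hkm q u r).toNat)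
    ((mem_piFinset_range_toNat_iff hP).2 fun r => (Int.toNat_of_nonneg (hP r)).le)
    fun i hi hne => ?_).trans ?_
  · obtain ⟨r, hr⟩ := Function.ne_iff.mp hne
    have hi := (mem_piFinset_range_toNat_iff hP).1 hi
    have hzi : z (u + ∑ r, (i r : ℤ) • e2 r) = 0 := by
      refine hz _ (he2.inS_add_sum_smul hu (fun r => by positivity) hi) ⟨r, ?_⟩
      change facePairing hkm q _ r ≠ 0
      rw [facePairing_add, he2.facePairing_sum_smul]
      have := hi r
      simp only [Pi.add_apply, Pi.neg_apply]
      omega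
    rw [hzi, mul_zero, zero_mul]
  · simp [Int.toNat_of_nonneg (hP _)]

lemma rmul_eq_of_vanishesOffFace_right (he1 : Compatible hkm q e1) {z : (Fin n → ℤ) → K}
    (hz : VanishesOffFace hkm q z) (w : (Fin n → ℤ) → K) {u : Fin n → ℤ} (hu : InS q u) :
    rmul hkm q e1 e2 w z u = w u * z (u + ∑ r, facePairing hkm q u r • e1 r) := by
  have hP : 0 ≤ facePairing hkm q u := facePairing_nonneg hu
  rw [rmul_apply]
  refine (sum_eq_single_of_mem 0 ((mem_piFinset_range_toNat_iff hP).2 fun r => hP r)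
    fun i hi hne => ?_).trans ?_
  · obtain ⟨r, hr⟩ := Function.ne_iff.mp hne
    have hi := (mem_piFinset_range_toNat_iff hP).1 hi
    have hr : (i r : ℤ) ≠ 0 := by simpa using hr
    have hzi : z (u + ∑ r, (facePairing hkm q u r - i r) • e1 r) = 0 := by
      refine hz _ (he1.inS_add_sum_smul hu (fun r => sub_nonneg.2 (hi r))
        (fun r => sub_le_self _ (by positivity))) ⟨r, ?_⟩
      change facePairing hkm q _ r ≠ 0
      rw [facePairing_add, he1.facePairing_sum_smul]
      simp only [Pi.add_apply, Pi.neg_apply]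
      omega
    rw [hzi, mul_zero]
  · simp

end Multiplication

section Center

variable {n m k : ℕ} {α : Type*} {hkm : k ≤ m} {q : Fin m → Fin n → ℤ}
  {e1 e2 : Fin k → Fin n → ℤ}

/-- Induction on `∑ r, ⟨p_r, u⟩`: trading one `e₁` for one `e₂` at a time is exactly the
hypothesis, applied at the point `v` below whose face pairing is `δ_r`. -/
lemma apply_add_sum_facePairing_smul_eq (he1 : Compatible hkm q e1) (he2 : Compatible hkm q e2)
    {x : (Fin n → ℤ) → α}
    (hx : ∀ r : Fin k, ∀ u : Fin n → ℤ, InS q u →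
      (∀ s : Fin k, pairZ (q (Fin.castLE hkm s)) u = if s = r then 1 else 0) →
      x (u + e1 r) = x (u + e2 r))
    {u : Fin n → ℤ} (hu : InS q u) :
    x (u + ∑ r, facePairing hkm q u r • e1 r) = x (u + ∑ r, facePairing hkm q u r • e2 r) := by
  obtain ⟨N, hN⟩ : ∃ N : ℕ, ∑ r, facePairing hkm q u r = N :=
    ⟨_, (Int.toNat_of_nonneg (sum_nonneg fun r _ => facePairing_nonneg hu r)).symm⟩
  induction N generalizing u with
  | zero =>
    have h0 : facePairing hkm q u = 0 := funext fun r =>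
      (sum_eq_zero_iff_of_nonneg fun r _ => facePairing_nonneg hu r).1 hN r (mem_univ r)
    simp [h0]
  | succ N ih =>
    obtain ⟨r, hr⟩ : ∃ r, facePairing hkm q u r ≠ 0 := by
      by_contra! h
      simp [h] at hN
      omega
    have hface : ∀ s, facePairing hkm q (u + e1 r) s =
        facePairing hkm q u s - if r = s then 1 else 0 := by
      intro s
      rw [facePairing_add, he1.facePairing_apply, Pi.add_apply]
      split_ifs <;> ring
    have hu' : InS q (u + e1 r) := by
      refine inS_of_facePairing_nonneg (hkm := hkm) (fun s => ?_) fun j hj => ?_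
      · have := facePairing_nonneg (hkm := hkm) hu s
        rw [hface]
        split_ifs with h
        · subst h; omega
        · omega
      · rw [pairZ_add]
        exact add_nonneg (hu j) (he1.2 r j hj)
    have hN' : ∑ s, facePairing hkm q (u + e1 r) s = N := by
      simp [hface, sum_sub_distrib, hN]
    set v := u + ∑ s, facePairing hkm q (u + e1 r) s • e2 s with hv_def
    have hv : InS q v := by
      refine he2.inS_add_sum_smul hu (facePairing_nonneg hu') fun s => ?_
      rw [hface]
      split_ifs <;> simp
    have hfv : ∀ s, pairZ (q (Fin.castLE hkm s)) v = if s = r then 1 else 0 := by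
      intro s
      change facePairing hkm q v s = _
      rw [facePairing_add, he2.facePairing_sum_smul, Pi.add_apply, Pi.neg_apply, hface]
      split_ifs <;> omega
    calc x (u + ∑ s, facePairing hkm q u s • e1 s)
        = x (u + e1 r + ∑ s, facePairing hkm q (u + e1 r) s • e1 s) := by
          rw [he1.sum_facePairing_add_smul]; abel_nf
      _ = x (u + e1 r + ∑ s, facePairing hkm q (u + e1 r) s • e2 s) := ih hu' hN'
      _ = x (v + e1 r) := by rw [add_right_comm]
      _ = x (v + e2 r) := hx r v hv hfv
      _ = x (u + ∑ s, facePairing hkm q u s • e2 s) := by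
          rw [hv_def, he1.sum_facePairing_add_smul]; abel_nf

end Center

lemma sum_smul_ne_sum_smul_of_linearIndependent {n k : ℕ} {e1 e2 : Fin k → Fin n → ℤ}
    (hact : LinearIndependent ℚ fun r : Fin k => fun i : Fin n => ((e2 r i - e1 r i : ℤ) : ℚ))
    {c : Fin k → ℤ} (hc : c ≠ 0) : ∑ r, c r • e1 r ≠ ∑ r, c r • e2 r := by
  intro h
  refine hc (funext fun r => ?_)
  have hzero : ∑ r, (c r : ℚ) • (fun i : Fin n => ((e2 r i - e1 r i : ℤ) : ℚ)) = 0 := by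
    funext i
    have hi := congrFun h i
    simp only [Finset.sum_apply, Pi.smul_apply, smul_eq_mul] at hi
    simp only [Finset.sum_apply, Pi.smul_apply, smul_eq_mul, Pi.zero_apply]
    exact_mod_cast by simp [mul_sub, sum_sub_distrib, hi]
  exact_mod_cast Fintype.linearIndependent_iff.mp hact _ hzero r

lemma two_zpow_injective (K : Type*) [Field K] [CharZero K] :
    Function.Injective fun a : ℤ => (2 : K) ^ a := by
  intro a b h
  have h' : (((2 : ℚ) ^ a : ℚ) : K) = (((2 : ℚ) ^ b : ℚ) : K) := by
    push_cast
    exact h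
  exact zpow_right_injective₀ (by norm_num : (0 : ℚ) < 2) (by norm_num) (Rat.cast_injective h')

section Points

variable {n m : ℕ} {K : Type*} [Field K] {q : Fin m → Fin n → ℤ}

lemma IsPoint.mul {x y : (Fin n → ℤ) → K} (hx : IsPoint q x) (hy : IsPoint q y) :
    IsPoint q fun v => x v * y v := by
  refine ⟨by simp [hx.1, hy.1], fun u v hu hv => ?_⟩
  simp only [hx.2 u v hu hv, hy.2 u v hu hv]
  ring

lemma isPoint_const_one : IsPoint q fun _ => (1 : K) :=
  ⟨rfl, fun _ _ _ _ => (one_mul 1).symm⟩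

lemma isPoint_zpow {a : K} (ha : a ≠ 0) (i : Fin n) : IsPoint q fun v => a ^ v i :=
  ⟨by simp, fun u v _ _ => zpow_add₀ ha (u i) (v i)⟩

end Points

section FaceCharacter

variable {n m k : ℕ} {K : Type*} [Field K] (hkm : k ≤ m) (q : Fin m → Fin n → ℤ)

lemma isPoint_xtau : IsPoint q (xtau (k := k) K hkm q) := by
  refine ⟨by simp [xtau, pairZ], fun u v hu hv => ?_⟩
  have key : (∀ r : Fin k, pairZ (q (Fin.castLE hkm r)) (u + v) = 0) ↔
      (∀ r : Fin k, pairZ (q (Fin.castLE hkm r)) u = 0) ∧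
        ∀ r : Fin k, pairZ (q (Fin.castLE hkm r)) v = 0 := by
    simp only [pairZ_add, ← forall_and]
    exact forall_congr' fun r => add_eq_zero_iff_of_nonneg (hu _) (hv _)
  simp only [xtau, key]
  split_ifs <;> simp_all

lemma vanishesOffFace_xtau_mul (f : (Fin n → ℤ) → K) :
    VanishesOffFace hkm q fun v => xtau (k := k) K hkm q v * f v := by
  rintro v - ⟨r, hr⟩
  dsimp only
  rw [xtau, if_neg fun h => hr (h r), zero_mul]

lemma xtau_eq_one {v : Fin n → ℤ} (hv : ∀ r, facePairing hkm q v r = 0) :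
    xtau (k := k) K hkm q v = 1 :=
  if_pos hv

end FaceCharacter

lemma vanishesOffFace_of_forall_rmul_comm {n m k : ℕ} {K : Type*} [Field K] [CharZero K]
    {hkm : k ≤ m} {q : Fin m → Fin n → ℤ} {e1 e2 : Fin k → Fin n → ℤ}
    (he1 : Compatible hkm q e1) (he2 : Compatible hkm q e2)
    (hact : LinearIndependent ℚ fun r : Fin k => fun i : Fin n => ((e2 r i - e1 r i : ℤ) : ℚ))
    {x : (Fin n → ℤ) → K}
    (hcomm : ∀ y : (Fin n → ℤ) → K, IsPoint q y → ∀ u : Fin n → ℤ, InS q u →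
      rmul hkm q e1 e2 x y u = rmul hkm q e1 e2 y x u) :
    VanishesOffFace hkm q x := by
  intro u hu hface
  by_contra hxu
  have hne : u + ∑ r, facePairing hkm q u r • e1 r ≠ u + ∑ r, facePairing hkm q u r • e2 r :=
    fun h => sum_smul_ne_sum_smul_of_linearIndependent hact (Function.ne_iff.mpr hface)
      (add_left_cancel h)
  obtain ⟨i, hi⟩ := Function.ne_iff.mp hne
  have hy := vanishesOffFace_xtau_mul hkm q fun v => (2 : K) ^ v i
  have h := hcomm _ ((isPoint_xtau hkm q).mul (isPoint_zpow two_ne_zero i)) u hu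
  rw [rmul_eq_of_vanishesOffFace_right he1 hy x hu, rmul_eq_of_vanishesOffFace_left he2 hy x hu,
    xtau_eq_one hkm q (congrFun (he1.facePairing_add_sum_facePairing_smul_eq_zero u)),
    xtau_eq_one hkm q (congrFun (he2.facePairing_add_sum_facePairing_smul_eq_zero u)),
    one_mul, one_mul, mul_comm _ (x u)] at h
  exact hi (two_zpow_injective K (mul_left_cancel₀ hxu h))

theorem statement_16_general {n m k : ℕ} {K : Type*} [Field K] [CharZero K]
    (hkm : k ≤ m)
    (q : Fin m → Fin n → ℤ) (e1 e2 : Fin k → Fin n → ℤ)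
    (he1 : Compatible hkm q e1) (he2 : Compatible hkm q e2)
    (hact : LinearIndependent ℚ
      fun r : Fin k => fun i : Fin n => ((e2 r i - e1 r i : ℤ) : ℚ))
    (x : (Fin n → ℤ) → K) :
    (∀ y : (Fin n → ℤ) → K, IsPoint q y → ∀ u : Fin n → ℤ, InS q u →
        rmul hkm q e1 e2 x y u = rmul hkm q e1 e2 y x u) ↔
    ((∀ u : Fin n → ℤ, InS q u →
        (∃ r : Fin k, pairZ (q (Fin.castLE hkm r)) u ≠ 0) → x u = 0) ∧
      (∀ r : Fin k, ∀ u : Fin n → ℤ, InS q u →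
        (∀ s : Fin k, pairZ (q (Fin.castLE hkm s)) u = if s = r then 1 else 0) →
        x (u + e1 r) = x (u + e2 r))) := by
  constructor
  · intro hcomm
    have hvanish := vanishesOffFace_of_forall_rmul_comm he1 he2 hact hcomm
    refine ⟨hvanish, fun r u hu hface => ?_⟩
    have hsum (e : Fin k → Fin n → ℤ) : ∑ s, facePairing hkm q u s • e s = e r := by
      simp [facePairing, hface, ite_smul]
    have h := hcomm _ isPoint_const_one u hu
    rwa [rmul_eq_of_vanishesOffFace_left he2 hvanish _ hu,
      rmul_eq_of_vanishesOffFace_right he1 hvanish _ hu, mul_one, one_mul, hsum, hsum,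
      eq_comm] at h
  · rintro ⟨hvanish, hswap⟩ y - u hu
    rw [rmul_eq_of_vanishesOffFace_left he2 hvanish y hu,
      rmul_eq_of_vanishesOffFace_right he1 hvanish y hu,
      apply_add_sum_facePairing_smul_eq he1 he2 hswap hu, mul_comm]

theorem statement_16 {n m k : ℕ} {K : Type*} [Field K] [CharZero K]
    (hn : 1 ≤ n) (hk : 1 ≤ k) (hkm : k ≤ m)
    (q : Fin m → Fin n → ℤ) (e1 e2 : Fin k → Fin n → ℤ)
    (he1 : Compatible hkm q e1) (he2 : Compatible hkm q e2)
    (hact : LinearIndependent ℚ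
      fun r : Fin k => fun i : Fin n => ((e2 r i - e1 r i : ℤ) : ℚ))
    (x : (Fin n → ℤ) → K) (hx : IsPoint q x) :
    (∀ y : (Fin n → ℤ) → K, IsPoint q y → ∀ u : Fin n → ℤ, InS q u →
        rmul hkm q e1 e2 x y u = rmul hkm q e1 e2 y x u) ↔
    ((∀ u : Fin n → ℤ, InS q u →
        (∃ r : Fin k, pairZ (q (Fin.castLE hkm r)) u ≠ 0) → x u = 0) ∧
      (∀ r : Fin k, ∀ u : Fin n → ℤ, InS q u →
        (∀ s : Fin k, pairZ (q (Fin.castLE hkm s)) u = if s = r then 1 else 0) →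
        x (u + e1 r) = x (u + e2 r))) :=
  statement_16_general hkm q e1 e2 he1 he2 hact x
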